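/- Let n ≥ 3 and k ≥ 1, and let (x, c, u) be a combinatorial degenerated magic polygon D(n,k). Then the magic sum and the root label satisfy the relation u = (k+1)·c. -/

import Mathlib

/-- The labeling function of a combinatorial degenerated magic polygon `D(n,k)`:
the labels `x t p` of the points on the `k` polygons (root vertex excluded)
together with the root label `c`. -/
def degMagicLabels (n k : ℕ) (x : Fin k → Fin (k * (n - 2) + 1) → ℕ) (c : ℕ) :
    (Fin k × Fin (k * (n - 2) + 1)) ⊕ Unit → ℕ :=
  Sum.elim (fun q => x q.1 q.2) (fun _ => c)

/-- `(x, c, u)` is a combinatorial degenerated magic polygon `D(n,k)`: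
(1) the `k²(n−2)+k+1` labels are exactly `1, …, k²(n−2)+k+1`, each occurring once;
(2) every edge sum `∑_{j=0}^{k} x t (i·k + j)`, for an edge not adjacent to the
root (`0 ≤ i ≤ n−3`), equals `u`;
(3) for every position `p`, the sum `(∑ t, x t p) + c` along the segment joining
the root vertex to the boundary of the largest polygon equals `u`. -/
def IsDegMagicPolygon (n k : ℕ) (x : Fin k → Fin (k * (n - 2) + 1) → ℕ) (c u : ℕ) : Prop :=
  Function.Injective (degMagicLabels n k x c) ∧
  Set.range (degMagicLabels n k x c) = Set.Icc 1 (k ^ 2 * (n - 2) + k + 1) ∧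
  (∀ t : Fin k, ∀ i ∈ Finset.range (n - 2),
    ∑ j ∈ Finset.range (k + 1), x t (Fin.ofNat _ (i * k + j : ℕ)) = u) ∧
  (∀ p : Fin (k * (n - 2) + 1), (∑ t : Fin k, x t p) + c = u)

/-! Count the entries of the first edge of every polygon twice: by edges, each of the `k` edges
sums to `u`; by radial segments, each of the `k + 1` segments through them sums to `u` once the
root label `c` is added. Hence `k u + (k + 1) c = (k + 1) u`. -/

open Finset

theorem card_nsmul_add_card_nsmul_eq_of_line_sums {κ α M : Type*} [Fintype κ]
    [AddCommMonoid M] (y : κ → α → M) (s : Finset α) (c u : M)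
    (hrow : ∀ t, ∑ j ∈ s, y t j = u) (hcol : ∀ j ∈ s, (∑ t, y t j) + c = u) :
    Fintype.card κ • u + #s • c = #s • u := by
  calc Fintype.card κ • u + #s • c
      = ∑ t, ∑ j ∈ s, y t j + ∑ _j ∈ s, c := by simp only [hrow, sum_const, card_univ]
    _ = ∑ j ∈ s, ((∑ t, y t j) + c) := by rw [sum_comm, sum_add_distrib]
    _ = #s • u := by rw [sum_congr rfl hcol, sum_const]

theorem degMagicPolygon_sum_eq_root_general (n k : ℕ) (hn : 3 ≤ n)
    (x : Fin k → Fin (k * (n - 2) + 1) → ℕ) (c u : ℕ)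
    (h : IsDegMagicPolygon n k x c u) :
    u = (k + 1) * c := by
  obtain ⟨-, -, hedge, hsegment⟩ := h
  have hfirst : ∀ t, ∑ j ∈ range (k + 1), x t (Fin.ofNat _ (0 * k + j : ℕ)) = u :=
    fun t => hedge t 0 (mem_range.mpr (by omega))
  have hcount := card_nsmul_add_card_nsmul_eq_of_line_sums
    (fun t j => x t (Fin.ofNat _ (0 * k + j : ℕ))) (range (k + 1)) c u hfirst
    (fun j _ => hsegment _)
  simp only [Fintype.card_fin, card_range, smul_eq_mul] at hcount
  linarith

theorem degMagicPolygon_sum_eq_root (n k : ℕ) (hn : 3 ≤ n) (hk : 1 ≤ k)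
    (x : Fin k → Fin (k * (n - 2) + 1) → ℕ) (c u : ℕ)
    (h : IsDegMagicPolygon n k x c u) :
    u = (k + 1) * c :=
  degMagicPolygon_sum_eq_root_general n k hn x c u h
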